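/- Let π be a PDLsf[Loop] path formula, let Minπ and Maxπ be path formulas whose semantics in every MSC are {(e,f) : ⟦π⟧(e)≠∅ and f=min_π(e)} and {(e,f) : ⟦π⟧(e)≠∅ and f=max_π(e)} respectively, let π⁻¹ be a path formula with ⟦π⁻¹⟧ the converse of ⟦π⟧, and let ←⁺ denote the path formula ←_true. Then the event formulas Loop(π) and Loop(Maxπ) ∨ (⟨π⁻¹⟩true ∧ Loop(Maxπ·←⁺) ∧ ¬Loop(Minπ·←⁺)) are equivalent: they have the same truth value at every event of every MSC over P and Σ. -/

import Mathlib

set_option maxHeartbeats 1000000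

/-! ## Message sequence charts -/

/-- A message sequence chart (MSC) over processes `P` and labels `Lab`.
Events are natural numbers; `E` is the finite nonempty set of events. -/
structure MSC (P : Type) (Lab : Type) where
  /-- the finite set of events -/
  E : Finset ℕ
  nonemptyE : E.Nonempty
  /-- process edges `→` (direct successor on a process) -/
  proc : ℕ → ℕ → Prop
  /-- message edges `◁` -/
  msg : ℕ → ℕ → Prop
  /-- location (process) of each event -/
  loc : ℕ → P
  /-- label of each event -/
  lab : ℕ → Lab
  proc_mem : ∀ e f, proc e f → e ∈ E ∧ f ∈ E
  msg_mem : ∀ e f, msg e f → e ∈ E ∧ f ∈ E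
  proc_loc : ∀ e f, proc e f → loc e = loc f
  msg_loc : ∀ e f, msg e f → loc e ≠ loc f
  /-- on each process, any two events are comparable w.r.t. `→⁺` -/
  proc_total : ∀ e f, e ∈ E → f ∈ E → loc e = loc f →
    e = f ∨ Relation.TransGen proc e f ∨ Relation.TransGen proc f e
  /-- `→` is the direct-successor (covering) relation of the order `→⁺` -/
  proc_cover : ∀ e f, proc e f →
    ¬ ∃ g, Relation.TransGen proc e g ∧ Relation.TransGen proc g f
  /-- every event belongs to at most one message edge -/
  msg_once : ∀ e f e' f', msg e f → msg e' f' →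
    (e = e' ∨ e = f' ∨ f = e' ∨ f = f') → e = e' ∧ f = f'
  /-- FIFO condition -/
  fifo : ∀ e f e' f', msg e f → msg e' f' → loc e = loc e' → loc f = loc f' →
    (Relation.ReflTransGen proc e e' ↔ Relation.ReflTransGen proc f f')
  /-- `→ ∪ ◁` is acyclic -/
  acyclic : ∀ e, ¬ Relation.TransGen (fun a b => proc a b ∨ msg a b) e e

namespace MSC

variable {P Lab : Type}

/-- `≤proc`, the reflexive transitive closure of `→`. -/
def procLe (M : MSC P Lab) : ℕ → ℕ → Prop := Relation.ReflTransGen M.proc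

/-- `<proc`, the transitive closure of `→`. -/
def procLt (M : MSC P Lab) : ℕ → ℕ → Prop := Relation.TransGen M.proc

/-- the happened-before relation `≤ = (→ ∪ ◁)*`. -/
def hb (M : MSC P Lab) : ℕ → ℕ → Prop :=
  Relation.ReflTransGen (fun a b => M.proc a b ∨ M.msg a b)

/-- Relabelling an MSC (same events and edges, new labelling). -/
def relabel {Γ : Type} (M : MSC P Lab) (γ : ℕ → Γ) : MSC P Γ where
  E := M.E
  nonemptyE := M.nonemptyE
  proc := M.proc
  msg := M.msg
  loc := M.loc
  lab := γ
  proc_mem := M.proc_mem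
  msg_mem := M.msg_mem
  proc_loc := M.proc_loc
  msg_loc := M.msg_loc
  proc_total := M.proc_total
  proc_cover := M.proc_cover
  msg_once := M.msg_once
  fifo := M.fifo
  acyclic := M.acyclic

end MSC

/-! ## Star-free PDL -/

mutual
/-- Event formulas of star-free PDL. -/
inductive EF (P Lab : Type) : Type where
  | proc : P → EF P Lab
  | lab : Lab → EF P Lab
  | or : EF P Lab → EF P Lab → EF P Lab
  | not : EF P Lab → EF P Lab
  | dia : PF P Lab → EF P Lab → EF P Lab
  | loop : PF P Lab → EF P Lab
/-- Path formulas of star-free PDL. -/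
inductive PF (P Lab : Type) : Type where
  | next : PF P Lab
  | prev : PF P Lab
  | msg : P → P → PF P Lab
  | msgInv : P → P → PF P Lab
  | nextG : EF P Lab → PF P Lab
  | prevG : EF P Lab → PF P Lab
  | jump : P → P → PF P Lab
  | test : EF P Lab → PF P Lab
  | comp : PF P Lab → PF P Lab → PF P Lab
  | union : PF P Lab → PF P Lab → PF P Lab
  | inter : PF P Lab → PF P Lab → PF P Lab
  | compl : PF P Lab → PF P Lab
end

mutual
/-- Satisfaction of event formulas at an event. -/
def EF.sat {P Lab : Type} (M : MSC P Lab) : EF P Lab → ℕ → Prop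
  | .proc p, e => e ∈ M.E ∧ M.loc e = p
  | .lab a, e => e ∈ M.E ∧ M.lab e = a
  | .or φ ψ, e => EF.sat M φ e ∨ EF.sat M ψ e
  | .not φ, e => e ∈ M.E ∧ ¬ EF.sat M φ e
  | .dia π φ, e => ∃ f, PF.sem M π e f ∧ EF.sat M φ f
  | .loop π, e => PF.sem M π e e
/-- Semantics of path formulas as binary relations on events. -/
def PF.sem {P Lab : Type} (M : MSC P Lab) : PF P Lab → ℕ → ℕ → Prop
  | .next, e, f => M.proc e f
  | .prev, e, f => M.proc f e
  | .msg p q, e, f => M.msg e f ∧ M.loc e = p ∧ M.loc f = q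
  | .msgInv p q, e, f => M.msg f e ∧ M.loc f = p ∧ M.loc e = q
  | .nextG φ, e, f => M.procLt e f ∧ ∀ g, M.procLt e g → M.procLt g f → EF.sat M φ g
  | .prevG φ, e, f => M.procLt f e ∧ ∀ g, M.procLt f g → M.procLt g e → EF.sat M φ g
  | .jump p r, e, f => e ∈ M.E ∧ f ∈ M.E ∧ M.loc e = p ∧ M.loc f = r
  | .test φ, e, f => e = f ∧ EF.sat M φ e
  | .comp π₁ π₂, e, f => ∃ g, PF.sem M π₁ e g ∧ PF.sem M π₂ g f
  | .union π₁ π₂, e, f => PF.sem M π₁ e f ∨ PF.sem M π₂ e f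
  | .inter π₁ π₂, e, f => PF.sem M π₁ e f ∧ PF.sem M π₂ e f
  | .compl π, e, f => e ∈ M.E ∧ f ∈ M.E ∧ ¬ PF.sem M π e f
end

/-- Sentences of star-free PDL. -/
inductive PDLS (P Lab : Type) : Type where
  | ex : EF P Lab → PDLS P Lab
  | or : PDLS P Lab → PDLS P Lab → PDLS P Lab
  | not : PDLS P Lab → PDLS P Lab

/-- Satisfaction of PDL sentences. -/
def PDLS.sat {P Lab : Type} (M : MSC P Lab) : PDLS P Lab → Prop
  | .ex φ => ∃ e ∈ M.E, EF.sat M φ e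
  | .or ξ ζ => PDLS.sat M ξ ∨ PDLS.sat M ζ
  | .not ξ => ¬ PDLS.sat M ξ

/-- The four optional operators of star-free PDL. -/
inductive PDLOp : Type where
  | loop | union | inter | compl
deriving DecidableEq

mutual
/-- `EF.inFrag R φ` : the event formula `φ` belongs to the fragment `PDLsf[R]`. -/
def EF.inFrag {P Lab : Type} (R : Set PDLOp) : EF P Lab → Prop
  | .proc _ => True
  | .lab _ => True
  | .or φ ψ => EF.inFrag R φ ∧ EF.inFrag R ψ
  | .not φ => EF.inFrag R φ
  | .dia π φ => PF.inFrag R π ∧ EF.inFrag R φ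
  | .loop π => PDLOp.loop ∈ R ∧ PF.inFrag R π
/-- `PF.inFrag R π` : the path formula `π` belongs to the fragment `PDLsf[R]`. -/
def PF.inFrag {P Lab : Type} (R : Set PDLOp) : PF P Lab → Prop
  | .next => True
  | .prev => True
  | .msg _ _ => True
  | .msgInv _ _ => True
  | .nextG φ => EF.inFrag R φ
  | .prevG φ => EF.inFrag R φ
  | .jump _ _ => True
  | .test φ => EF.inFrag R φ
  | .comp π₁ π₂ => PF.inFrag R π₁ ∧ PF.inFrag R π₂
  | .union π₁ π₂ => PDLOp.union ∈ R ∧ PF.inFrag R π₁ ∧ PF.inFrag R π₂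
  | .inter π₁ π₂ => PDLOp.inter ∈ R ∧ PF.inFrag R π₁ ∧ PF.inFrag R π₂
  | .compl π => PDLOp.compl ∈ R ∧ PF.inFrag R π
end

/-- `PDLS.inFrag R ξ` : the sentence `ξ` belongs to the fragment `PDLsf[R]`. -/
def PDLS.inFrag {P Lab : Type} (R : Set PDLOp) : PDLS P Lab → Prop
  | .ex φ => EF.inFrag R φ
  | .or ξ ζ => PDLS.inFrag R ξ ∧ PDLS.inFrag R ζ
  | .not ξ => PDLS.inFrag R ξ

/-- Conjunction of event formulas (derived operator). -/
def EF.and {P Lab : Type} (φ ψ : EF P Lab) : EF P Lab :=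
  .not (.or (.not φ) (.not ψ))

/-- `isMinOf M π e m` : `m` is the `≤proc`-least element of `⟦π⟧_M(e)`
(in particular `⟦π⟧_M(e)` is nonempty). -/
def isMinOf {P Lab : Type} (M : MSC P Lab) (π : PF P Lab) (e m : ℕ) : Prop :=
  PF.sem M π e m ∧ ∀ f, PF.sem M π e f → M.procLe m f

/-- `isMaxOf M π e m` : `m` is the `≤proc`-greatest element of `⟦π⟧_M(e)`
(in particular `⟦π⟧_M(e)` is nonempty). -/
def isMaxOf {P Lab : Type} (M : MSC P Lab) (π : PF P Lab) (e m : ℕ) : Prop :=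
  PF.sem M π e m ∧ ∀ f, PF.sem M π e f → M.procLe f m

/-! ## MSO/FO logic over MSCs -/

/-- Formulas of MSO over MSCs: first-order kernel with atoms `p(x)`, `a(x)`,
`x = y`, `x → y`, `x ◁ y`, `x ≤ y` and additionally `x ∈ X_k` (monadic
second-order variables, used for the EMSO prefix). -/
inductive FOS (P Lab : Type) : Type where
  | pred : P → ℕ → FOS P Lab
  | lab : Lab → ℕ → FOS P Lab
  | eq : ℕ → ℕ → FOS P Lab
  | edge : ℕ → ℕ → FOS P Lab
  | medge : ℕ → ℕ → FOS P Lab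
  | le : ℕ → ℕ → FOS P Lab
  | inSet : ℕ → ℕ → FOS P Lab
  | or : FOS P Lab → FOS P Lab → FOS P Lab
  | not : FOS P Lab → FOS P Lab
  | ex : ℕ → FOS P Lab → FOS P Lab

/-- Satisfaction, with a first-order valuation `ν` and a second-order valuation `σ`.
First-order quantification ranges over the events of the MSC. -/
def FOS.sat {P Lab : Type} (M : MSC P Lab) : FOS P Lab → (ℕ → ℕ) → (ℕ → Set ℕ) → Prop
  | .pred p x, ν, _ => M.loc (ν x) = p
  | .lab a x, ν, _ => M.lab (ν x) = a
  | .eq x y, ν, _ => ν x = ν y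
  | .edge x y, ν, _ => M.proc (ν x) (ν y)
  | .medge x y, ν, _ => M.msg (ν x) (ν y)
  | .le x y, ν, _ => M.hb (ν x) (ν y)
  | .inSet x k, ν, σ => ν x ∈ σ k
  | .or Φ Ψ, ν, σ => FOS.sat M Φ ν σ ∨ FOS.sat M Ψ ν σ
  | .not Φ, ν, σ => ¬ FOS.sat M Φ ν σ
  | .ex x Φ, ν, σ => ∃ e ∈ M.E, FOS.sat M Φ (Function.update ν x e) σ

/-- Free first-order variables. -/
def FOS.free {P Lab : Type} : FOS P Lab → Finset ℕ
  | .pred _ x => {x}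
  | .lab _ x => {x}
  | .eq x y => {x, y}
  | .edge x y => {x, y}
  | .medge x y => {x, y}
  | .le x y => {x, y}
  | .inSet x _ => {x}
  | .or Φ Ψ => FOS.free Φ ∪ FOS.free Ψ
  | .not Φ => FOS.free Φ
  | .ex x Φ => (FOS.free Φ).erase x

/-- All first-order variables occurring (free or bound). -/
def FOS.vars {P Lab : Type} : FOS P Lab → Finset ℕ
  | .pred _ x => {x}
  | .lab _ x => {x}
  | .eq x y => {x, y}
  | .edge x y => {x, y}
  | .medge x y => {x, y}
  | .le x y => {x, y}
  | .inSet x _ => {x}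
  | .or Φ Ψ => FOS.vars Φ ∪ FOS.vars Ψ
  | .not Φ => FOS.vars Φ
  | .ex x Φ => insert x (FOS.vars Φ)

/-- A formula is first-order (`FO[→,◁,≤]`) iff it contains no set atoms. -/
def FOS.noSets {P Lab : Type} : FOS P Lab → Prop
  | .pred _ _ => True
  | .lab _ _ => True
  | .eq _ _ => True
  | .edge _ _ => True
  | .medge _ _ => True
  | .le _ _ => True
  | .inSet _ _ => False
  | .or Φ Ψ => FOS.noSets Φ ∧ FOS.noSets Ψ
  | .not Φ => FOS.noSets Φ
  | .ex _ Φ => FOS.noSets Φ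

/-! ## Communicating finite-state machines -/

/-- Actions of a process: internal `⟨a⟩`, send `!(a,m,q)`, receive `?(a,m,q)`. -/
inductive CAct (P Lab Msg : Type) : Type where
  | int : Lab → CAct P Lab Msg
  | snd : Lab → Msg → P → CAct P Lab Msg
  | rcv : Lab → Msg → P → CAct P Lab Msg

/-- The label performed by an action. -/
def CAct.label {P Lab Msg : Type} : CAct P Lab Msg → Lab
  | .int a => a
  | .snd a _ _ => a
  | .rcv a _ _ => a

/-- A communicating finite-state machine over `P` and `Lab`. -/
structure CFM (P Lab : Type) where
  /-- states -/
  S : Type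
  finS : Fintype S
  /-- messages -/
  Msg : Type
  finMsg : Fintype Msg
  /-- initial state of each process -/
  ι : P → S
  /-- transition relation of each process -/
  Δ : P → S → CAct P Lab Msg → S → Prop
  Δ_snd : ∀ p s a m q s', Δ p s (.snd a m q) s' → q ≠ p
  Δ_rcv : ∀ p s a m q s', Δ p s (.rcv a m q) s' → q ≠ p
  /-- acceptance condition -/
  Acc : (P → S) → Prop

/-- Existence of an accepting run of a CFM on an MSC. -/
def CFM.Accepts {P Lab : Type} (A : CFM P Lab) (M : MSC P Lab) : Prop :=
  ∃ (src tgt : ℕ → A.S) (act : ℕ → CAct P Lab A.Msg),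
    (∀ e ∈ M.E, A.Δ (M.loc e) (src e) (act e) (tgt e)) ∧
    (∀ e ∈ M.E, (act e).label = M.lab e) ∧
    (∀ e ∈ M.E, (¬ ∃ f, M.proc f e) → src e = A.ι (M.loc e)) ∧
    (∀ e f, M.proc e f → tgt e = src f) ∧
    (∀ e ∈ M.E, (¬ ∃ f, M.msg e f) → (¬ ∃ f, M.msg f e) → ∃ a, act e = .int a) ∧
    (∀ e f, M.msg e f →
      ∃ a a' m, act e = .snd a m (M.loc f) ∧ act f = .rcv a' m (M.loc e)) ∧
    (∃ fin : P → A.S,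
      (∀ p, (∀ e ∈ M.E, M.loc e ≠ p) → fin p = A.ι p) ∧
      (∀ e ∈ M.E, (¬ ∃ f, M.proc e f) → fin (M.loc e) = tgt e) ∧
      A.Acc fin)

/-- The language of a CFM. -/
def CFM.lang {P Lab : Type} (A : CFM P Lab) : Set (MSC P Lab) := {M | A.Accepts M}

/-! ## Letter-to-letter MSC transducers -/

/-- The relation accepted by a letter-to-letter MSC transducer from `Lab` to `Γ`,
i.e., a CFM over `P` and `Lab × Γ`. -/
def Ltrans {P Lab Γ : Type} (A : CFM P (Lab × Γ)) (M : MSC P Lab) (N : MSC P Γ) : Prop :=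
  ∃ γ : ℕ → Γ, N = M.relabel γ ∧ A.Accepts (M.relabel fun e => (M.lab e, γ e))

/-- `M_φ` : the MSC over `Bool` obtained from `M` by labelling each event with
the truth value of the event formula `φ`. -/
noncomputable def MSC.evalEF {P Lab : Type} (M : MSC P Lab) (φ : EF P Lab) : MSC P Bool :=
  M.relabel fun e => @ite Bool (EF.sat M φ e) (Classical.propDecidable _) true false

/-! ## Boolean combinations -/

/-- Boolean combinations over atoms of type `α`. -/
inductive BC (α : Type) : Type where
  | atom : α → BC α
  | or : BC α → BC α → BC α
  | not : BC α → BC α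

/-- Evaluation of a boolean combination given truth values of the atoms. -/
def BC.eval {α : Type} (v : α → Prop) : BC α → Prop
  | .atom a => v a
  | .or b c => BC.eval v b ∨ BC.eval v c
  | .not b => ¬ BC.eval v b

/-- The atoms occurring in a boolean combination. -/
def BC.atoms {α : Type} : BC α → Set α
  | .atom a => {a}
  | .or b c => BC.atoms b ∪ BC.atoms c
  | .not b => BC.atoms b

/-! ## Bounded MSCs -/

/-- `r` is a linearization of `M`: a total order on the events containing
the happened-before relation. -/
def IsLinearization {P Lab : Type} (M : MSC P Lab) (r : ℕ → ℕ → Prop) : Prop :=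
  (∀ e ∈ M.E, r e e) ∧
  (∀ e ∈ M.E, ∀ f ∈ M.E, r e f → r f e → e = f) ∧
  (∀ e ∈ M.E, ∀ f ∈ M.E, ∀ g ∈ M.E, r e f → r f g → r e g) ∧
  (∀ e ∈ M.E, ∀ f ∈ M.E, r e f ∨ r f e) ∧
  (∀ e ∈ M.E, ∀ f ∈ M.E, M.hb e f → r e f)

/-- `r` is a `B`-bounded linearization of `M`: at any point, each channel
contains at most `B` pending messages. -/
def IsBBoundedLin {P Lab : Type} (M : MSC P Lab) (r : ℕ → ℕ → Prop) (B : ℕ) : Prop :=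
  IsLinearization M r ∧
  ∀ g ∈ M.E, ∀ p q : P, p ≠ q →
    Set.ncard {ef : ℕ × ℕ | M.msg ef.1 ef.2 ∧ M.loc ef.1 = p ∧ M.loc ef.2 = q ∧
      r ef.1 g ∧ ¬ r ef.2 g} ≤ B

/-- `M` is `∃B`-bounded: some linearization of `M` is `B`-bounded. -/
def ExistsBBounded {P Lab : Type} (M : MSC P Lab) (B : ℕ) : Prop :=
  ∃ r : ℕ → ℕ → Prop, IsBBoundedLin M r B

/-- `g` is a send event on channel `(p,q)`. -/
def isSendOn {P Lab : Type} (M : MSC P Lab) (p q : P) (g : ℕ) : Prop :=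
  M.loc g = p ∧ ∃ h, M.msg g h ∧ M.loc h = q

/-- `revB M B f g` : `f` is a receive event with matching send `e` on some
channel `(p,q)`, and `g` is the `B`-th send on channel `(p,q)` strictly after `e`. -/
def revB {P Lab : Type} (M : MSC P Lab) (B : ℕ) (f g : ℕ) : Prop :=
  ∃ e, M.msg e f ∧ isSendOn M (M.loc e) (M.loc f) g ∧ M.procLt e g ∧
    Set.ncard {g' | isSendOn M (M.loc e) (M.loc f) g' ∧ M.procLt e g' ∧ M.procLe g' g} = B

/-- `≤_B = (≤ ∪ rev_B)*`. -/
def leB {P Lab : Type} (M : MSC P Lab) (B : ℕ) : ℕ → ℕ → Prop :=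
  Relation.ReflTransGen (fun a b => (M.proc a b ∨ M.msg a b) ∨ revB M B a b)

/-- `<_B`, the strict part of `≤_B`. -/
def ltB {P Lab : Type} (M : MSC P Lab) (B : ℕ) (e f : ℕ) : Prop :=
  leB M B e f ∧ ¬ leB M B f e

/-- `e ∥_B f` : incomparable w.r.t. `≤_B`. -/
def parB {P Lab : Type} (M : MSC P Lab) (B : ℕ) (e f : ℕ) : Prop :=
  ¬ leB M B e f ∧ ¬ leB M B f e

/-- `↑_B e = {g : e ≤_B g}`. -/
def upB {P Lab : Type} (M : MSC P Lab) (B : ℕ) (e : ℕ) : Set ℕ :=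
  {g | leB M B e g}

/-- The order `≺_B` (w.r.t. a fixed total order on `P`): `e ≺_B f` iff `e <_B f`, or
`e ∥_B f` and the `⊑`-minimum of `loc(↑_B e \ ↑_B f)` is strictly below the
`⊑`-minimum of `loc(↑_B f \ ↑_B e)`. -/
def precB {P Lab : Type} [LinearOrder P] (M : MSC P Lab) (B : ℕ) (e f : ℕ) : Prop :=
  ltB M B e f ∨
    (parB M B e f ∧ ∃ p ∈ M.loc '' (upB M B e \ upB M B f),
      ∀ q ∈ M.loc '' (upB M B f \ upB M B e), p < q)

/-! Path formulas without `∪` and complement are *uncrossing*: if `(e, f)` and `(e', f')` are in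
`⟦π⟧` with `e ≤proc e'` and `f' ≤proc f`, then so are `(e, f')` and `(e', f)`; moreover the
process of a source determines the process of its targets, and conversely. So `⟦π⟧(e)` is a finite
chain; let `m = max_π(e)` and `n = min_π(e)`. If `(e, e) ∈ ⟦π⟧` then `e ≤proc m`, and
`n ≤proc e` rules out `Loop(Minπ·←⁺)`. Conversely, if `e <proc m`, `¬ e <proc n` and
`(f, e) ∈ ⟦π⟧`, then uncrossing `(f, e)` with `(e, n)` (when `f ≤proc e`) or with `(e, m)`
(when `e ≤proc f`) gives `(e, e) ∈ ⟦π⟧`. -/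

theorem Finset.exists_forall_rel_of_total {α : Type*} {r : α → α → Prop}
    (hr : ∀ a b c, r a b → r b c → r a c)
    {s : Finset α} (hs : s.Nonempty) (htot : ∀ a ∈ s, ∀ b ∈ s, r a b ∨ r b a) :
    ∃ m ∈ s, ∀ a ∈ s, r a m := by
  induction hs using Finset.Nonempty.cons_induction with
  | singleton a =>
    refine ⟨a, mem_singleton_self a, fun b hb => ?_⟩
    rw [mem_singleton.mp hb]
    simpa using htot a (mem_singleton_self a) a (mem_singleton_self a)
  | cons a s ha hs ih =>
    obtain ⟨m, hm, hmax⟩ := ih fun x hx y hy => htot x (mem_cons_of_mem hx) y (mem_cons_of_mem hy)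
    rcases htot a (mem_cons_self a s) m (mem_cons_of_mem hm) with ham | hma
    · refine ⟨m, mem_cons_of_mem hm, fun b hb => ?_⟩
      rcases mem_cons.mp hb with rfl | hb
      exacts [ham, hmax b hb]
    · refine ⟨a, mem_cons_self a s, fun b hb => ?_⟩
      rcases mem_cons.mp hb with rfl | hb
      exacts [by simpa using htot b hb b hb, hr _ _ _ (hmax b hb) hma]

open Relation

namespace MSC

variable {P Lab : Type} (M : MSC P Lab) {e f : ℕ}

theorem procLt_mem (h : M.procLt e f) : e ∈ M.E ∧ f ∈ M.E := by
  induction h with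
  | single h => exact M.proc_mem _ _ h
  | tail _ h ih => exact ⟨ih.1, (M.proc_mem _ _ h).2⟩

theorem loc_eq_of_procLt (h : M.procLt e f) : M.loc e = M.loc f := by
  induction h with
  | single h => exact M.proc_loc _ _ h
  | tail _ h ih => exact ih.trans (M.proc_loc _ _ h)

theorem loc_eq_of_procLe (h : M.procLe e f) : M.loc e = M.loc f := by
  rcases reflTransGen_iff_eq_or_transGen.mp h with rfl | h
  exacts [rfl, M.loc_eq_of_procLt h]

theorem procLt_irrefl (e : ℕ) : ¬ M.procLt e e := fun h =>
  M.acyclic e (TransGen.mono (fun _ _ => Or.inl) _ _ h)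

theorem procLt_of_procLe_of_ne (h : M.procLe e f) (hne : e ≠ f) : M.procLt e f := by
  rcases reflTransGen_iff_eq_or_transGen.mp h with rfl | h
  exacts [absurd rfl hne, h]

theorem procLe_antisymm (h : M.procLe e f) (h' : M.procLe f e) : e = f := by
  by_contra hne
  exact M.procLt_irrefl e ((M.procLt_of_procLe_of_ne h hne).trans_left h')

theorem procLe_total (he : e ∈ M.E) (hf : f ∈ M.E) (hl : M.loc e = M.loc f) :
    M.procLe e f ∨ M.procLe f e := by
  rcases M.proc_total e f he hf hl with rfl | h | h
  exacts [Or.inl ReflTransGen.refl, Or.inl h.to_reflTransGen, Or.inr h.to_reflTransGen]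

theorem procLe_of_not_procLt (he : e ∈ M.E) (hf : f ∈ M.E) (hl : M.loc e = M.loc f)
    (h : ¬ M.procLt e f) : M.procLe f e := by
  rcases M.procLe_total he hf hl with hef | hfe
  · rcases reflTransGen_iff_eq_or_transGen.mp hef with rfl | hlt
    exacts [ReflTransGen.refl, absurd hlt h]
  · exact hfe

theorem eq_of_proc_of_proc {e' f' : ℕ} (h : M.proc e f) (h' : M.proc e' f')
    (he : M.procLe e e') (hf : M.procLe f' f) : e = e' ∧ f = f' := by
  have hee : e = e' := by
    by_contra hne
    exact M.proc_cover e f h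
      ⟨e', M.procLt_of_procLe_of_ne he hne, (TransGen.single h').trans_left hf⟩
  subst hee
  refine ⟨rfl, ?_⟩
  by_contra hne
  exact M.proc_cover e f h ⟨f', TransGen.single h', M.procLt_of_procLe_of_ne hf (Ne.symm hne)⟩

theorem eq_of_msg_of_msg {e' f' : ℕ} (h : M.msg e f) (h' : M.msg e' f')
    (hle : M.loc e = M.loc e') (hlf : M.loc f = M.loc f')
    (he : M.procLe e e') (hf : M.procLe f' f) : e = e' ∧ f = f' :=
  have hff : f = f' := M.procLe_antisymm ((M.fifo e f e' f' h h' hle hlf).mp he) hf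
  M.msg_once e f e' f' h h' (Or.inr (Or.inr (Or.inr hff)))

end MSC

variable {P Lab : Type}

mutual
theorem EF.mem_of_sat (M : MSC P Lab) : ∀ (φ : EF P Lab) {e : ℕ}, EF.sat M φ e → e ∈ M.E
  | .proc _, _, h => h.1
  | .lab _, _, h => h.1
  | .or φ ψ, _, h => h.elim (EF.mem_of_sat M φ) (EF.mem_of_sat M ψ)
  | .not _, _, h => h.1
  | .dia π _, _, ⟨_, h, _⟩ => (PF.mem_of_sem M π h).1
  | .loop π, _, h => (PF.mem_of_sem M π h).1
theorem PF.mem_of_sem (M : MSC P Lab) :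
    ∀ (π : PF P Lab) {e f : ℕ}, PF.sem M π e f → e ∈ M.E ∧ f ∈ M.E
  | .next, e, f, h => M.proc_mem e f h
  | .prev, e, f, h => (M.proc_mem f e h).symm
  | .msg _ _, e, f, h => M.msg_mem e f h.1
  | .msgInv _ _, e, f, h => (M.msg_mem f e h.1).symm
  | .nextG _, _, _, h => M.procLt_mem h.1
  | .prevG _, _, _, h => (M.procLt_mem h.1).symm
  | .jump _ _, _, _, h => ⟨h.1, h.2.1⟩
  | .test φ, _, _, ⟨rfl, h⟩ => ⟨EF.mem_of_sat M φ h, EF.mem_of_sat M φ h⟩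
  | .comp π₁ π₂, _, _, ⟨_, h₁, h₂⟩ => ⟨(PF.mem_of_sem M π₁ h₁).1, (PF.mem_of_sem M π₂ h₂).2⟩
  | .union π₁ π₂, _, _, h => h.elim (PF.mem_of_sem M π₁) (PF.mem_of_sem M π₂)
  | .inter π₁ _, _, _, h => PF.mem_of_sem M π₁ h.1
  | .compl _, _, _, h => ⟨h.1, h.2.1⟩
end

namespace PF

variable {R : Set PDLOp} {M : MSC P Lab}

theorem loc_eq_iff_of_sem (hu : PDLOp.union ∉ R) (hc : PDLOp.compl ∉ R) :
    ∀ (π : PF P Lab), π.inFrag R → ∀ {e f e' f' : ℕ}, PF.sem M π e f → PF.sem M π e' f' →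
      (M.loc e = M.loc e' ↔ M.loc f = M.loc f')
  | .next, _, _, _, _, _, h, h' => by rw [M.proc_loc _ _ h, M.proc_loc _ _ h']
  | .prev, _, _, _, _, _, h, h' => by rw [M.proc_loc _ _ h, M.proc_loc _ _ h']
  | .msg _ _, _, _, _, _, _, h, h' =>
      iff_of_true (h.2.1.trans h'.2.1.symm) (h.2.2.trans h'.2.2.symm)
  | .msgInv _ _, _, _, _, _, _, h, h' =>
      iff_of_true (h.2.2.trans h'.2.2.symm) (h.2.1.trans h'.2.1.symm)
  | .nextG _, _, _, _, _, _, h, h' => by rw [M.loc_eq_of_procLt h.1, M.loc_eq_of_procLt h'.1]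
  | .prevG _, _, _, _, _, _, h, h' => by rw [M.loc_eq_of_procLt h.1, M.loc_eq_of_procLt h'.1]
  | .jump _ _, _, _, _, _, _, h, h' =>
      iff_of_true (h.2.2.1.trans h'.2.2.1.symm) (h.2.2.2.trans h'.2.2.2.symm)
  | .test _, _, _, _, _, _, ⟨rfl, _⟩, ⟨rfl, _⟩ => Iff.rfl
  | .comp π₁ π₂, hπ, _, _, _, _, ⟨_, h₁, h₂⟩, ⟨_, h₁', h₂'⟩ =>
      (loc_eq_iff_of_sem hu hc π₁ hπ.1 h₁ h₁').trans (loc_eq_iff_of_sem hu hc π₂ hπ.2 h₂ h₂')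
  | .union _ _, hπ, _, _, _, _, _, _ => absurd hπ.1 hu
  | .inter π₁ _, hπ, _, _, _, _, h, h' => loc_eq_iff_of_sem hu hc π₁ hπ.2.1 h.1 h'.1
  | .compl _, hπ, _, _, _, _, _, _ => absurd hπ.1 hc

theorem sem_uncross (hu : PDLOp.union ∉ R) (hc : PDLOp.compl ∉ R) :
    ∀ (π : PF P Lab), π.inFrag R → ∀ {e f e' f' : ℕ}, PF.sem M π e f → PF.sem M π e' f' →
      M.procLe e e' → M.procLe f' f → PF.sem M π e f' ∧ PF.sem M π e' f
  | .next, _, _, _, _, _, h, h', he, hf => by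
      obtain ⟨rfl, rfl⟩ := M.eq_of_proc_of_proc h h' he hf
      exact ⟨h, h⟩
  | .prev, _, _, _, _, _, h, h', he, hf => by
      obtain ⟨rfl, rfl⟩ := M.eq_of_proc_of_proc h' h hf he
      exact ⟨h, h⟩
  | .msg _ _, _, _, _, _, _, h, h', he, hf => by
      obtain ⟨rfl, rfl⟩ := M.eq_of_msg_of_msg h.1 h'.1
        (h.2.1.trans h'.2.1.symm) (h.2.2.trans h'.2.2.symm) he hf
      exact ⟨h, h⟩
  | .msgInv _ _, _, _, _, _, _, h, h', he, hf => by
      obtain ⟨rfl, rfl⟩ := M.eq_of_msg_of_msg h'.1 h.1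
        (h'.2.1.trans h.2.1.symm) (h'.2.2.trans h.2.2.symm) hf he
      exact ⟨h, h⟩
  | .nextG _, _, _, _, _, _, h, h', he, hf =>
      ⟨⟨h'.1.trans_right he, fun g hg₁ hg₂ => h.2 g hg₁ (hg₂.trans_left hf)⟩,
        ⟨h'.1.trans_left hf, fun g hg₁ hg₂ => h.2 g (hg₁.trans_right he) hg₂⟩⟩
  | .prevG _, _, _, _, _, _, h, h', he, hf =>
      ⟨⟨h.1.trans_right hf, fun g hg₁ hg₂ => h'.2 g hg₁ (hg₂.trans_left he)⟩,
        ⟨h.1.trans_left he, fun g hg₁ hg₂ => h'.2 g (hg₁.trans_right hf) hg₂⟩⟩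
  | .jump _ _, _, _, _, _, _, h, h', _, _ =>
      ⟨⟨h.1, h'.2.1, h.2.2.1, h'.2.2.2⟩, ⟨h'.1, h.2.1, h'.2.2.1, h.2.2.2⟩⟩
  | .test _, _, _, _, _, _, ⟨rfl, hφ⟩, ⟨rfl, _⟩, he, hf => by
      obtain rfl := M.procLe_antisymm he hf
      exact ⟨⟨rfl, hφ⟩, ⟨rfl, hφ⟩⟩
  | .comp π₁ π₂, hπ, _, _, _, _, ⟨g, h₁, h₂⟩, ⟨g', h₁', h₂'⟩, he, hf => by
      have hg : M.loc g = M.loc g' :=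
        (loc_eq_iff_of_sem hu hc π₂ hπ.2 h₂ h₂').mpr (M.loc_eq_of_procLe hf).symm
      rcases M.procLe_total (mem_of_sem M π₂ h₂).1 (mem_of_sem M π₂ h₂').1 hg with hgg | hgg
      · obtain ⟨h₂₁, h₂₂⟩ := sem_uncross hu hc π₂ hπ.2 h₂ h₂' hgg hf
        exact ⟨⟨g, h₁, h₂₁⟩, ⟨g', h₁', h₂₂⟩⟩
      · obtain ⟨h₁₁, h₁₂⟩ := sem_uncross hu hc π₁ hπ.1 h₁ h₁' he hgg
        exact ⟨⟨g', h₁₁, h₂'⟩, ⟨g, h₁₂, h₂⟩⟩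
  | .union _ _, hπ, _, _, _, _, _, _, _, _ => absurd hπ.1 hu
  | .inter π₁ π₂, hπ, _, _, _, _, h, h', he, hf =>
      have h₁ := sem_uncross hu hc π₁ hπ.2.1 h.1 h'.1 he hf
      have h₂ := sem_uncross hu hc π₂ hπ.2.2 h.2 h'.2 he hf
      ⟨⟨h₁.1, h₂.1⟩, ⟨h₁.2, h₂.2⟩⟩
  | .compl _, hπ, _, _, _, _, _, _, _, _ => absurd hπ.1 hc

variable {π : PF P Lab} {e f : ℕ}

theorem procLe_total_of_sem (hu : PDLOp.union ∉ R) (hc : PDLOp.compl ∉ R) (hπ : π.inFrag R)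
    {f' : ℕ} (h : PF.sem M π e f) (h' : PF.sem M π e f') : M.procLe f f' ∨ M.procLe f' f :=
  M.procLe_total (mem_of_sem M π h).2 (mem_of_sem M π h').2
    ((loc_eq_iff_of_sem hu hc π hπ h h').mp rfl)

theorem exists_isMaxOf (hu : PDLOp.union ∉ R) (hc : PDLOp.compl ∉ R) (hπ : π.inFrag R)
    (h : PF.sem M π e f) : ∃ m, isMaxOf M π e m := by
  classical
  obtain ⟨m, hm, hmax⟩ := Finset.exists_forall_rel_of_total (r := M.procLe)
    (fun _ _ _ => ReflTransGen.trans) (s := M.E.filter (PF.sem M π e))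
    ⟨f, Finset.mem_filter.mpr ⟨(mem_of_sem M π h).2, h⟩⟩
    fun a ha b hb => procLe_total_of_sem hu hc hπ (Finset.mem_filter.mp ha).2
      (Finset.mem_filter.mp hb).2
  exact ⟨m, (Finset.mem_filter.mp hm).2,
    fun g hg => hmax g (Finset.mem_filter.mpr ⟨(mem_of_sem M π hg).2, hg⟩)⟩

theorem exists_isMinOf (hu : PDLOp.union ∉ R) (hc : PDLOp.compl ∉ R) (hπ : π.inFrag R)
    (h : PF.sem M π e f) : ∃ n, isMinOf M π e n := by
  classical
  obtain ⟨n, hn, hmin⟩ := Finset.exists_forall_rel_of_total (r := flip M.procLe)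
    (fun _ _ _ h₁ h₂ => ReflTransGen.trans h₂ h₁) (s := M.E.filter (PF.sem M π e))
    ⟨f, Finset.mem_filter.mpr ⟨(mem_of_sem M π h).2, h⟩⟩
    fun a ha b hb => (procLe_total_of_sem hu hc hπ (Finset.mem_filter.mp ha).2
      (Finset.mem_filter.mp hb).2).symm
  exact ⟨n, (Finset.mem_filter.mp hn).2,
    fun g hg => hmin g (Finset.mem_filter.mpr ⟨(mem_of_sem M π hg).2, hg⟩)⟩

theorem sem_self_iff (hu : PDLOp.union ∉ R) (hc : PDLOp.compl ∉ R) (hπ : π.inFrag R) :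
    PF.sem M π e e ↔ isMaxOf M π e e ∨ ((∃ f, PF.sem M π f e) ∧
      (∃ m, isMaxOf M π e m ∧ M.procLt e m) ∧ ¬ ∃ n, isMinOf M π e n ∧ M.procLt e n) := by
  constructor
  · intro h
    obtain ⟨m, hm⟩ := exists_isMaxOf hu hc hπ h
    by_cases hem : e = m
    · exact Or.inl (hem ▸ hm)
    refine Or.inr ⟨⟨e, h⟩, ⟨m, hm, M.procLt_of_procLe_of_ne (hm.2 e h) hem⟩, ?_⟩
    rintro ⟨n, hn, hen⟩
    exact M.procLt_irrefl e (hen.trans_left (hn.2 e h))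
  · rintro (hmax | ⟨⟨f, hf⟩, ⟨m, hm, hem⟩, hn⟩)
    · exact hmax.1
    obtain ⟨n, hnmin⟩ := exists_isMinOf hu hc hπ hm.1
    have hloc_em : M.loc e = M.loc m := M.loc_eq_of_procLt hem
    have hloc_en : M.loc e = M.loc n :=
      hloc_em.trans ((loc_eq_iff_of_sem hu hc π hπ hm.1 hnmin.1).mp rfl)
    have hloc_fe : M.loc f = M.loc e := (loc_eq_iff_of_sem hu hc π hπ hf hm.1).mpr hloc_em
    have hne : M.procLe n e := M.procLe_of_not_procLt (mem_of_sem M π hf).2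
      (mem_of_sem M π hnmin.1).2 hloc_en fun hen => hn ⟨n, hnmin, hen⟩
    rcases M.procLe_total (mem_of_sem M π hf).1 (mem_of_sem M π hf).2 hloc_fe with hfe | hef
    · exact (sem_uncross hu hc π hπ hf hnmin.1 hfe hne).2
    · exact (sem_uncross hu hc π hπ hm.1 hf hef hem.to_reflTransGen).1

end PF

theorem EF.sat_and_of_mem {M : MSC P Lab} {φ ψ : EF P Lab} {e : ℕ} (he : e ∈ M.E) :
    EF.sat M (φ.and ψ) e ↔ EF.sat M φ e ∧ EF.sat M ψ e := by
  simp [EF.and, EF.sat, he]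

theorem PF.sem_prevG_iff_of_forall_sat {M : MSC P Lab} {φ : EF P Lab}
    (hφ : ∀ g ∈ M.E, EF.sat M φ g) {e f : ℕ} : PF.sem M (.prevG φ) e f ↔ M.procLt f e :=
  ⟨And.left, fun h => ⟨h, fun g hg _ => hφ g (M.procLt_mem hg).2⟩⟩

/-- Rewriting of loops: for a `PDLsf[Loop]` path formula `π`,
with `mn`, `mx` defining `{(e, min_π(e))}` resp. `{(e, max_π(e))}`, `pinv`
defining the converse of `π`, and `tt` a tautological event formula (so that
`←⁺ = ←_tt`), the event formulas `Loop(π)` and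
`Loop(mx) ∨ (⟨π⁻¹⟩true ∧ Loop(mx·←⁺) ∧ ¬Loop(mn·←⁺))` agree at every event of
every MSC. -/
theorem loop_rewriting {P Lab : Type}
    [Fintype P] [Nonempty P] [Fintype Lab] [Nonempty Lab]
    (π mn mx pinv : PF P Lab) (tt : EF P Lab)
    (hπ : PF.inFrag {PDLOp.loop} π)
    (hmn : ∀ (M : MSC P Lab) (e f : ℕ), PF.sem M mn e f ↔ isMinOf M π e f)
    (hmx : ∀ (M : MSC P Lab) (e f : ℕ), PF.sem M mx e f ↔ isMaxOf M π e f)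
    (hpinv : ∀ (M : MSC P Lab) (e f : ℕ), PF.sem M pinv e f ↔ PF.sem M π f e)
    (htt : ∀ (M : MSC P Lab) (e : ℕ), EF.sat M tt e ↔ e ∈ M.E) :
    ∀ (M : MSC P Lab), ∀ e ∈ M.E,
      (EF.sat M (EF.loop π) e ↔
        EF.sat M (EF.or (EF.loop mx)
          (EF.and (EF.dia pinv tt)
            (EF.and (EF.loop (PF.comp mx (PF.prevG tt)))
              (EF.not (EF.loop (PF.comp mn (PF.prevG tt))))))) e) := by
  intro M e he
  have hloop (σ : PF P Lab) :
      EF.sat M (.loop (.comp σ (.prevG tt))) e ↔ ∃ g, PF.sem M σ e g ∧ M.procLt e g :=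
    exists_congr fun _ => and_congr_right fun _ =>
      PF.sem_prevG_iff_of_forall_sat fun g hg => (htt M g).mpr hg
  have hdia : EF.sat M (.dia pinv tt) e ↔ ∃ f, PF.sem M π f e :=
    exists_congr fun f => by
      rw [hpinv, htt]
      exact and_iff_left_of_imp fun h => (PF.mem_of_sem M π h).1
  rw [EF.sat, EF.sat, EF.sat_and_of_mem he, EF.sat_and_of_mem he, hdia, hloop, EF.sat, hloop]
  simp only [EF.sat, hmx, hmn, he, true_and]
  exact PF.sem_self_iff (by simp) (by simp) hπ
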